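/- arXiv:1912.08243 — 4 statements merged into one kernel-verified Lean document; each statement's English description precedes it below -/
import Mathlib

section
/- Consider the consumption dynamics x̄(k+1) = (α−p)·1 + G x̄(k) + β G x̲(k) and x̲(k+1) = (α−p)·1 + G x̲(k) + β G x̄(k) with x̄(0) = s̄ and x̲(0) = s̲. If 0 < δ < 1 and the spectral radius of G is strictly less than 1/(δ(1+β)), then the series Σ_{k=1}^∞ δ^k x̄(k) and Σ_{k=1}^∞ δ^k x̲(k) converge in ℝⁿ. -/
/-!
The sum `xa + xb` and the difference `xa - xb` decouple: they follow affine recursions driven by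
`(1 + β) • G` and `(1 - β) • G`. By Gelfand's formula the powers of both matrices grow at most
like `C * u ^ k` for every `u > (1 + β) ρ(G)`, and the hypothesis leaves room to choose such a `u`
in `(1, 1/δ)`. Iterating an affine recursion then gives `‖x k‖ = O(u ^ k)`, so the discounted
series are dominated by a geometric series of ratio `δ * u < 1`.
-/

open Matrix

/-- The spectral radius of a real matrix, defined via its complexification. -/
noncomputable def specRad {n : ℕ} (G : Matrix (Fin n) (Fin n) ℝ) : ENNReal :=
  spectralRadius ℂ (G.map (algebraMap ℝ ℂ))

open Filter Asymptotics Finset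

attribute [local instance] Matrix.linftyOpSeminormedAddCommGroup Matrix.linftyOpNormedRing
  Matrix.linftyOpNormedAlgebra

theorem exists_norm_pow_le_of_spectralRadius_lt {A : Type*} [NormedRing A] [NormedAlgebra ℂ A]
    [CompleteSpace A] (a : A) {r : ℝ} (hr : 0 < r)
    (h : spectralRadius ℂ a < ENNReal.ofReal r) :
    ∃ C : ℝ, ∀ k : ℕ, ‖a ^ k‖ ≤ C * r ^ k := by
  have hlt : ∀ᶠ k : ℕ in atTop, ENNReal.ofReal (‖a ^ k‖ ^ (1 / k : ℝ)) < ENNReal.ofReal r :=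
    (spectrum.pow_norm_pow_one_div_tendsto_nhds_spectralRadius a).eventually_lt_const h
  have hO : (fun k : ℕ => a ^ k) =O[cofinite] fun k => r ^ k := by
    rw [Nat.cofinite_eq_atTop]
    refine IsBigO.of_bound 1 ((hlt.and (eventually_gt_atTop 0)).mono fun k ⟨hk, hk0⟩ => ?_)
    rw [ENNReal.ofReal_lt_ofReal_iff hr, one_div,
      Real.rpow_inv_lt_iff_of_pos (norm_nonneg _) hr.le (by positivity), Real.rpow_natCast] at hk
    rw [one_mul, Real.norm_of_nonneg (by positivity)]
    exact hk.le
  exact (isBigO_cofinite_iff fun k hk => absurd hk (by positivity)).mp hO |>.imp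
    fun C hC k => by simpa [abs_of_pos hr] using hC k

theorem norm_smul_pow_le {A : Type*} [SeminormedRing A] [NormedAlgebra ℝ A] {a : A} {C r s t : ℝ}
    (ha : ∀ k : ℕ, ‖a ^ k‖ ≤ C * r ^ k) (ht : |t| ≤ s) (k : ℕ) :
    ‖(t • a) ^ k‖ ≤ C * (s * r) ^ k :=
  calc ‖(t • a) ^ k‖ ≤ |t| ^ k * ‖a ^ k‖ := by
        rw [smul_pow, ← Real.norm_eq_abs, ← norm_pow]; exact norm_smul_le _ _
    _ ≤ s ^ k * (C * r ^ k) :=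
        mul_le_mul (pow_le_pow_left₀ (abs_nonneg t) ht k) (ha k) (norm_nonneg _)
          (pow_nonneg ((abs_nonneg t).trans ht) k)
    _ = C * (s * r) ^ k := by ring

theorem summable_pow_smul_of_norm_le_geometric {E : Type*} [NormedAddCommGroup E]
    [NormedSpace ℝ E] [CompleteSpace E] {x : ℕ → E} {K u δ : ℝ} (hu : 0 ≤ u) (hδ : 0 ≤ δ)
    (hδu : δ * u < 1) (hx : ∀ k, ‖x k‖ ≤ K * u ^ k) :
    Summable fun k => δ ^ k • x k := by
  refine .of_norm_bounded ((summable_geometric_of_lt_one (by positivity) hδu).mul_left K)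
    fun k => ?_
  rw [norm_smul, Real.norm_of_nonneg (by positivity), mul_pow, mul_left_comm]
  gcongr
  exact hx k

namespace Matrix

theorem linfty_opNorm_map_of_nnnorm_eq {m n α β : Type*} [Fintype m] [Fintype n]
    [SeminormedAddCommGroup α] [SeminormedAddCommGroup β] (A : Matrix m n α) (f : α → β)
    (hf : ∀ x, ‖f x‖₊ = ‖x‖₊) : ‖A.map f‖ = ‖A‖ := by
  simp only [linfty_opNorm_def, map_apply, hf]

theorem exists_norm_pow_le_of_specRad_lt {n : ℕ} (G : Matrix (Fin n) (Fin n) ℝ) {r : ℝ}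
    (hr : 0 < r) (h : specRad G < ENNReal.ofReal r) :
    ∃ C : ℝ, ∀ k : ℕ, ‖G ^ k‖ ≤ C * r ^ k := by
  refine (exists_norm_pow_le_of_spectralRadius_lt _ hr h).imp fun C hC k => ?_
  have hmap : (G ^ k).map (algebraMap ℝ ℂ) = G.map (algebraMap ℝ ℂ) ^ k := by
    simp only [← RingHom.mapMatrix_apply, map_pow]
  rw [← linfty_opNorm_map_of_nnnorm_eq _ (algebraMap ℝ ℂ) fun x => by simp, hmap]
  exact hC k

theorem exists_norm_smul_pow_le_of_specRad_lt {n : ℕ} (G : Matrix (Fin n) (Fin n) ℝ) {s δ : ℝ}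
    (hs : 0 < s) (hδ0 : 0 < δ) (hδ1 : δ < 1) (h : specRad G < ENNReal.ofReal (1 / (δ * s))) :
    ∃ C u : ℝ, 1 < u ∧ δ * u < 1 ∧ ∀ t : ℝ, |t| ≤ s → ∀ k : ℕ, ‖(t • G) ^ k‖ ≤ C * u ^ k := by
  obtain ⟨r, -, hρr, hr⟩ := ENNReal.lt_iff_exists_real_btwn.mp h
  rw [ENNReal.ofReal_lt_ofReal_iff (by positivity), lt_div_iff₀ (by positivity)] at hr
  obtain ⟨u, hu, huδ⟩ : ∃ u, max 1 (s * r) < u ∧ u < 1 / δ :=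
    exists_between (max_lt ((one_lt_div hδ0).mpr hδ1) (by rw [lt_div_iff₀ hδ0]; linarith))
  obtain ⟨hu1, hru⟩ := max_lt_iff.mp hu
  obtain ⟨C, hC⟩ := exists_norm_pow_le_of_specRad_lt G (r := u / s) (by positivity)
    (hρr.trans_le (ENNReal.ofReal_le_ofReal ((le_div_iff₀ hs).mpr (by linarith))))
  refine ⟨C, u, hu1, by rwa [lt_div_iff₀' hδ0] at huδ, fun t ht k => ?_⟩
  simpa only [mul_div_cancel₀ u hs.ne'] using norm_smul_pow_le hC ht k

variable {ι R : Type*} [Fintype ι] [DecidableEq ι]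

theorem affine_iterate_eq [Semiring R] (A : Matrix ι ι R) (c : ι → R) {x : ℕ → ι → R}
    (hx : ∀ k, x (k + 1) = c + A *ᵥ x k) (k : ℕ) :
    x k = A ^ k *ᵥ x 0 + ∑ j ∈ range k, A ^ j *ᵥ c := by
  induction k with
  | zero => simp
  | succ k ih =>
    rw [hx, ih, mulVec_add, mulVec_sum, sum_range_succ', pow_zero, one_mulVec, mulVec_mulVec,
      ← pow_succ']
    simp only [mulVec_mulVec, ← pow_succ']
    abel

theorem norm_affine_iterate_le [SeminormedRing R] (A : Matrix ι ι R) (c : ι → R) {x : ℕ → ι → R}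
    (hx : ∀ k, x (k + 1) = c + A *ᵥ x k) {C u : ℝ} (hu : 1 < u)
    (hA : ∀ k : ℕ, ‖A ^ k‖ ≤ C * u ^ k) (k : ℕ) :
    ‖x k‖ ≤ C * (‖x 0‖ + ‖c‖ / (u - 1)) * u ^ k := by
  have hC : 0 ≤ C := by simpa using (norm_nonneg _).trans (hA 0)
  have hgeom : ∑ j ∈ range k, u ^ j ≤ u ^ k / (u - 1) := by
    rw [geom_sum_eq hu.ne']
    gcongr
    linarith
  rw [affine_iterate_eq A c hx k]
  calc ‖A ^ k *ᵥ x 0 + ∑ j ∈ range k, A ^ j *ᵥ c‖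
      ≤ ‖A ^ k‖ * ‖x 0‖ + ∑ j ∈ range k, ‖A ^ j‖ * ‖c‖ :=
        norm_add_le_of_le (linfty_opNorm_mulVec _ _)
          ((norm_sum_le _ _).trans (sum_le_sum fun j _ => linfty_opNorm_mulVec _ _))
    _ ≤ C * u ^ k * ‖x 0‖ + ∑ j ∈ range k, C * u ^ j * ‖c‖ := by
        gcongr with j
        · exact hA k
        · exact hA j
    _ = C * u ^ k * ‖x 0‖ + C * ‖c‖ * ∑ j ∈ range k, u ^ j := by
        rw [mul_sum]; congr 1; exact sum_congr rfl fun j _ => by ring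
    _ ≤ C * u ^ k * ‖x 0‖ + C * ‖c‖ * (u ^ k / (u - 1)) := by gcongr
    _ = C * (‖x 0‖ + ‖c‖ / (u - 1)) * u ^ k := by ring

theorem summable_pow_smul_of_affine_recurrence (A : Matrix ι ι ℝ) (c : ι → ℝ) {x : ℕ → ι → ℝ}
    (hx : ∀ k, x (k + 1) = c + A *ᵥ x k) {C u δ : ℝ} (hu : 1 < u) (hδ : 0 ≤ δ) (hδu : δ * u < 1)
    (hA : ∀ k : ℕ, ‖A ^ k‖ ≤ C * u ^ k) :
    Summable fun k => δ ^ k • x k :=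
  summable_pow_smul_of_norm_le_geometric (by linarith) hδ hδu
    (norm_affine_iterate_le A c hx hu hA)

end Matrix

theorem stmt_3_general {n : ℕ} (G : Matrix (Fin n) (Fin n) ℝ) (α p β δ : ℝ)
    (xa xb : ℕ → Fin n → ℝ)
    (hβ0 : 0 ≤ β)
    (hδ0 : 0 < δ) (hδ1 : δ < 1)
    (hspec : specRad G < ENNReal.ofReal (1 / (δ * (1 + β))))
    (ha : ∀ k, xa (k + 1) =
      (fun _ => α - p) + G *ᵥ xa k + β • (G *ᵥ xb k))
    (hb : ∀ k, xb (k + 1) =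
      (fun _ => α - p) + G *ᵥ xb k + β • (G *ᵥ xa k)) :
    Summable (fun k : ℕ => δ ^ (k + 1) • xa (k + 1)) ∧
      Summable (fun k : ℕ => δ ^ (k + 1) • xb (k + 1)) := by
  obtain ⟨C, u, hu1, hδu, hCu⟩ :=
    exists_norm_smul_pow_le_of_specRad_lt G (by linarith) hδ0 hδ1 hspec
  have hsum_rec (k : ℕ) : xa (k + 1) + xb (k + 1) =
      (fun _ => 2 * (α - p)) + ((1 + β) • G) *ᵥ (xa k + xb k) := by
    rw [ha, hb, smul_mulVec, mulVec_add]
    ext i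
    simp only [Pi.add_apply, Pi.smul_apply, smul_eq_mul]
    ring
  have hdiff_rec (k : ℕ) : xa (k + 1) - xb (k + 1) = 0 + ((1 - β) • G) *ᵥ (xa k - xb k) := by
    rw [ha, hb, smul_mulVec, mulVec_sub]
    ext i
    simp only [Pi.add_apply, Pi.sub_apply, Pi.smul_apply, Pi.zero_apply, smul_eq_mul]
    ring
  have hsum := summable_pow_smul_of_affine_recurrence (x := xa + xb) _ _ hsum_rec hu1 hδ0.le hδu
    (hCu _ (abs_le.mpr ⟨by linarith, le_rfl⟩))
  have hdiff := summable_pow_smul_of_affine_recurrence (x := xa - xb) _ _ hdiff_rec hu1 hδ0.le hδu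
    (hCu _ (abs_le.mpr ⟨by linarith, by linarith⟩))
  have hxa : Summable fun k => δ ^ k • xa k :=
    ((hsum.add hdiff).const_smul (2⁻¹ : ℝ)).congr fun k => by
      ext i; simp only [Pi.smul_apply, Pi.add_apply, Pi.sub_apply, smul_eq_mul]; ring
  have hxb : Summable fun k => δ ^ k • xb k :=
    ((hsum.sub hdiff).const_smul (2⁻¹ : ℝ)).congr fun k => by
      ext i; simp only [Pi.smul_apply, Pi.add_apply, Pi.sub_apply, smul_eq_mul]; ring
  exact ⟨(summable_nat_add_iff 1).mpr hxa, (summable_nat_add_iff 1).mpr hxb⟩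

/-- convergence of the discounted consumption series. -/
theorem stmt_3 {n : ℕ} (G : Matrix (Fin n) (Fin n) ℝ) (α p β δ : ℝ)
    (sa sb : Fin n → ℝ) (xa xb : ℕ → Fin n → ℝ)
    (hG : ∀ i j, 0 ≤ G i j) (hβ0 : 0 ≤ β) (hβ1 : β < 1)
    (hδ0 : 0 < δ) (hδ1 : δ < 1)
    (hspec : specRad G < ENNReal.ofReal (1 / (δ * (1 + β))))
    (h0a : xa 0 = sa) (h0b : xb 0 = sb)
    (ha : ∀ k, xa (k + 1) =
      (fun _ => α - p) + G *ᵥ xa k + β • (G *ᵥ xb k))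
    (hb : ∀ k, xb (k + 1) =
      (fun _ => α - p) + G *ᵥ xb k + β • (G *ᵥ xa k)) :
    Summable (fun k : ℕ => δ ^ (k + 1) • xa (k + 1)) ∧
      Summable (fun k : ℕ => δ ^ (k + 1) • xb (k + 1)) :=
  stmt_3_general G α p β δ xa xb hβ0 hδ0 hδ1 hspec ha hb
end

section
/- Let G ∈ ℝ₊^{n×n} with spectral radius strictly less than 1/(δ(1+β)), where 0 < δ < 1 and 0 ≤ β < 1, and let A be the 2n×2n block matrix [[Gᵀ, βGᵀ], [βGᵀ, Gᵀ]]. Then I_{2n} − δA is invertible, and the vector formed by the first n entries of (I_{2n} − δA)^{−1} applied to the stacked vector (1_n, 0_n) equals (1/2)·(I_n − δ(1−β)Gᵀ)^{−1} 1_n + (1/2)·(I_n − δ(1+β)Gᵀ)^{−1} 1_n. -/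
open Matrix

lemma aux_unit {n : ℕ} (G : Matrix (Fin n) (Fin n) ℝ) (c : ℝ) (hc : 0 < c)
    (h : specRad G < ENNReal.ofReal (1 / c)) :
    IsUnit (1 - c • Gᵀ) := by
  set f := algebraMap ℝ ℂ
  have hnn : ‖((1 / c : ℝ) : ℂ)‖₊ = Real.toNNReal (1 / c) := by
    ext
    simp only [coe_nnnorm, Complex.norm_real, Real.norm_eq_abs, Real.coe_toNNReal',
      abs_of_pos (by positivity : (0:ℝ) < 1 / c)]
    rw [max_eq_left (by positivity)]
  have hnotmem : ((1 / c : ℝ) : ℂ) ∉ spectrum ℂ (G.map f) := by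
    intro hk
    have hle : (‖((1 / c : ℝ) : ℂ)‖₊ : ENNReal) ≤ spectralRadius ℂ (G.map f) :=
      le_iSup₂ (f := fun k (_ : k ∈ spectrum ℂ (G.map f)) => (‖k‖₊ : ENNReal)) _ hk
    rw [hnn] at hle
    have : ENNReal.ofReal (1 / c) ≤ specRad G := by
      rw [ENNReal.ofReal]
      exact hle
    exact absurd h (not_lt.mpr this)
  have hres' : IsUnit (algebraMap ℂ (Matrix (Fin n) (Fin n) ℂ) ((1 / c : ℝ) : ℂ) - G.map f) :=
    spectrum.notMem_iff.mp hnotmem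
  have hcne : ((c : ℝ) : ℂ) ≠ 0 := by exact_mod_cast hc.ne'
  have hunitC : IsUnit ((1 : Matrix (Fin n) (Fin n) ℂ) - ((c : ℝ) : ℂ) • G.map f) := by
    have hc_unit : IsUnit (algebraMap ℂ (Matrix (Fin n) (Fin n) ℂ) ((c : ℝ) : ℂ)) :=
      (isUnit_iff_ne_zero.mpr hcne).map (algebraMap ℂ (Matrix (Fin n) (Fin n) ℂ))
    have := hc_unit.mul hres'
    convert this using 1
    rw [Algebra.algebraMap_eq_smul_one, Algebra.algebraMap_eq_smul_one]
    rw [smul_mul_assoc, one_mul, smul_sub, smul_smul]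
    have hone : ((c : ℝ) : ℂ) * ((1 / c : ℝ) : ℂ) = 1 := by
      push_cast
      field_simp
    rw [hone, one_smul]
  -- transfer to ℝ
  have hmap : ((1 : Matrix (Fin n) (Fin n) ℝ) - c • G).map f
      = (1 : Matrix (Fin n) (Fin n) ℂ) - ((c : ℝ) : ℂ) • G.map f := by
    ext i j
    by_cases hij : i = j <;> simp [Matrix.one_apply, hij, f, sub_mul, mul_comm]
  have hdetC : IsUnit (((1 : Matrix (Fin n) (Fin n) ℝ) - c • G).map f).det := by
    rw [hmap]; exact hunitC.map detMonoidHom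
  rw [← RingHom.mapMatrix_apply, ← RingHom.map_det] at hdetC
  have hdet : IsUnit ((1 : Matrix (Fin n) (Fin n) ℝ) - c • G).det := by
    rcases eq_or_ne ((1 : Matrix (Fin n) (Fin n) ℝ) - c • G).det 0 with h0 | h0
    · rw [h0, map_zero] at hdetC
      exact absurd hdetC (by simp)
    · exact isUnit_iff_ne_zero.mpr h0
  rw [Matrix.isUnit_iff_isUnit_det]
  have htr : (1 : Matrix (Fin n) (Fin n) ℝ) - c • Gᵀ = ((1 : Matrix (Fin n) (Fin n) ℝ) - c • G)ᵀ := by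
    rw [transpose_sub, transpose_one, transpose_smul]
  rw [htr, Matrix.det_transpose]
  exact hdet

/-- the first `n` entries of `(I − δA)⁻¹ (1ₙ, 0ₙ)` for the block
matrix `A = [[Gᵀ, βGᵀ], [βGᵀ, Gᵀ]]` give the bi-product centrality. -/
theorem stmt_5 {n : ℕ} (G : Matrix (Fin n) (Fin n) ℝ) (β δ : ℝ)
    (hG : ∀ i j, 0 ≤ G i j) (hβ0 : 0 ≤ β) (hβ1 : β < 1)
    (hδ0 : 0 < δ) (hδ1 : δ < 1)
    (hspec : specRad G < ENNReal.ofReal (1 / (δ * (1 + β)))) :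
    IsUnit (1 - δ • Matrix.fromBlocks Gᵀ (β • Gᵀ) (β • Gᵀ) Gᵀ) ∧
    (fun i : Fin n =>
        ((1 - δ • Matrix.fromBlocks Gᵀ (β • Gᵀ) (β • Gᵀ) Gᵀ)⁻¹ *ᵥ
          Sum.elim (1 : Fin n → ℝ) (0 : Fin n → ℝ)) (Sum.inl i)) =
      (1 / 2 : ℝ) • ((1 - (δ * (1 - β)) • Gᵀ)⁻¹ *ᵥ (1 : Fin n → ℝ)) +
        (1 / 2 : ℝ) • ((1 - (δ * (1 + β)) • Gᵀ)⁻¹ *ᵥ (1 : Fin n → ℝ)) := by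
  have h1β : 0 < δ * (1 + β) := by positivity
  have h1β' : 0 < δ * (1 - β) := by nlinarith
  have hp : IsUnit ((1 : Matrix (Fin n) (Fin n) ℝ) - (δ * (1 + β)) • Gᵀ) :=
    aux_unit G _ h1β hspec
  have hm : IsUnit ((1 : Matrix (Fin n) (Fin n) ℝ) - (δ * (1 - β)) • Gᵀ) := by
    refine aux_unit G _ h1β' (lt_of_lt_of_le hspec (ENNReal.ofReal_le_ofReal ?_))
    apply one_div_le_one_div_of_le h1β'
    nlinarith
  set Bp := (1 : Matrix (Fin n) (Fin n) ℝ) - (δ * (1 + β)) • Gᵀ with hBp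
  set Bm := (1 : Matrix (Fin n) (Fin n) ℝ) - (δ * (1 - β)) • Gᵀ with hBm
  set P := (2 : ℝ)⁻¹ • (Bp⁻¹ + Bm⁻¹) with hP
  set Q := (2 : ℝ)⁻¹ • (Bp⁻¹ - Bm⁻¹) with hQ
  set C := (1 : Matrix (Fin n) (Fin n) ℝ) - δ • Gᵀ with hC
  set D := -((δ * β) • Gᵀ) with hD
  have hCDp : C + D = Bp := by rw [hC, hD, hBp]; module
  have hCDm : C - D = Bm := by rw [hC, hD, hBm]; module
  have hinvp : Bp * Bp⁻¹ = 1 :=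
    Matrix.mul_nonsing_inv _ ((Matrix.isUnit_iff_isUnit_det _).mp hp)
  have hinvm : Bm * Bm⁻¹ = 1 :=
    Matrix.mul_nonsing_inv _ ((Matrix.isUnit_iff_isUnit_det _).mp hm)
  have hblock : (1 : Matrix (Fin n ⊕ Fin n) (Fin n ⊕ Fin n) ℝ)
      - δ • Matrix.fromBlocks Gᵀ (β • Gᵀ) (β • Gᵀ) Gᵀ = Matrix.fromBlocks C D D C := by
    have c1 : (1 : Matrix (Fin n) (Fin n) ℝ) + -(δ • Gᵀ) = C := by rw [hC]; module
    have c2 : (0 : Matrix (Fin n) (Fin n) ℝ) + -(δ • (β • Gᵀ)) = D := by rw [hD]; module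
    rw [fromBlocks_smul, ← fromBlocks_one, sub_eq_add_neg, fromBlocks_neg, fromBlocks_add,
      c1, c2]
  have e1 : (C + D) * Bp⁻¹ = 1 := by rw [hCDp, hinvp]
  have e2 : (C - D) * Bm⁻¹ = 1 := by rw [hCDm, hinvm]
  have h1 : C * P + D * Q = 1 := by
    have : C * P + D * Q = (2 : ℝ)⁻¹ • ((C + D) * Bp⁻¹ + (C - D) * Bm⁻¹) := by
      rw [hP, hQ]
      simp only [mul_smul_comm, mul_add, mul_sub, add_mul, sub_mul, smul_add, smul_sub]
      abel
    rw [this, e1, e2, ← two_smul ℝ (1 : Matrix (Fin n) (Fin n) ℝ), smul_smul]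
    norm_num
  have h2 : C * Q + D * P = 0 := by
    have : C * Q + D * P = (2 : ℝ)⁻¹ • ((C + D) * Bp⁻¹ - (C - D) * Bm⁻¹) := by
      rw [hP, hQ]
      simp only [mul_smul_comm, mul_add, mul_sub, add_mul, sub_mul, smul_add, smul_sub]
      abel
    rw [this, e1, e2, sub_self, smul_zero]
  have hmul : Matrix.fromBlocks C D D C * Matrix.fromBlocks P Q Q P = 1 := by
    have h1' : D * Q + C * P = 1 := by rw [add_comm]; exact h1
    have h2' : D * P + C * Q = 0 := by rw [add_comm]; exact h2
    rw [fromBlocks_multiply, h1, h2, h2', h1', fromBlocks_one]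
  have hunit : IsUnit (Matrix.fromBlocks C D D C) :=
    ⟨⟨_, _, hmul, mul_eq_one_comm.mp hmul⟩, rfl⟩
  have hinvblock : (Matrix.fromBlocks C D D C)⁻¹ = Matrix.fromBlocks P Q Q P :=
    Matrix.inv_eq_right_inv hmul
  rw [hblock]
  refine ⟨hunit, ?_⟩
  funext i
  simp only [hinvblock, fromBlocks_mulVec, Sum.elim_inl, Pi.add_apply, Pi.smul_apply]
  have hcomp1 : (Sum.elim (1 : Fin n → ℝ) (0 : Fin n → ℝ)) ∘ Sum.inl = (1 : Fin n → ℝ) := rfl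
  have hcomp2 : (Sum.elim (1 : Fin n → ℝ) (0 : Fin n → ℝ)) ∘ Sum.inr = (0 : Fin n → ℝ) := rfl
  rw [hcomp1, hcomp2, Matrix.mulVec_zero]
  rw [hP, Matrix.smul_mulVec, Matrix.add_mulVec]
  simp only [Pi.zero_apply, add_zero, Pi.smul_apply, Pi.add_apply, smul_eq_mul]
  ring
end

section
/- Let G ∈ ℝ₊^{n×n} with spectral radius strictly less than 1/(δ(1+β)), where 0 < δ < 1 and 0 ≤ β < 1, and let A be the 2n×2n block matrix [[Gᵀ, βGᵀ], [βGᵀ, Gᵀ]]. Then I_{2n} − δA is invertible, and the vector formed by the first n entries of (I_{2n} − δA)^{−1} applied to the stacked vector (1_n, 1_n) equals (I_n − δ(1+β)Gᵀ)^{−1} 1_n. -/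
open Matrix

namespace Matrix

variable {m R : Type*} [Fintype m] [CommRing R]

theorem det_fromBlocks_self_swap [DecidableEq m] (A B : Matrix m m R) :
    (fromBlocks A B B A).det = (A + B).det * (A - B).det := by
  have hconj : fromBlocks 1 0 (-1) 1 * fromBlocks A B B A * fromBlocks 1 0 1 1 =
      fromBlocks (A + B) B 0 (A - B) := by
    simp only [fromBlocks_multiply]
    congr 1 <;> simp only [Matrix.one_mul, Matrix.zero_mul, Matrix.mul_one, Matrix.mul_zero,
      Matrix.neg_mul, add_zero, zero_add] <;> abel
  simpa [det_fromBlocks_zero₁₂, det_fromBlocks_zero₂₁] using congrArg det hconj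

theorem fromBlocks_self_swap_mulVec_sum_elim_self (A B : Matrix m m R) (v : m → R) :
    fromBlocks A B B A *ᵥ Sum.elim v v = Sum.elim ((A + B) *ᵥ v) ((A + B) *ᵥ v) := by
  rw [fromBlocks_mulVec, Sum.elim_comp_inl, Sum.elim_comp_inr, add_mulVec, add_comm (B *ᵥ v)]

end Matrix

section SpectralRadius

variable {n : ℕ} (G : Matrix (Fin n) (Fin n) ℝ)

theorem isUnit_one_sub_smul_of_lt_inv_specRad {c : ℝ} (h : (‖c‖₊ : ENNReal) < (specRad G)⁻¹) :
    IsUnit (1 - c • G) := by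
  -- `spectralRadius` does not depend on the norm, so any complete algebra norm will do.
  let := Matrix.linftyOpNormedRing (n := Fin n) (α := ℂ)
  let := Matrix.linftyOpNormedAlgebra (n := Fin n) (R := ℂ) (α := ℂ)
  have hC : IsUnit (1 - (c : ℂ) • G.map (algebraMap ℝ ℂ)) :=
    spectrum.isUnit_one_sub_smul_of_lt_inv_radius (by rwa [Complex.nnnorm_real])
  have hmap : 1 - (c : ℂ) • G.map (algebraMap ℝ ℂ) = (algebraMap ℝ ℂ).mapMatrix (1 - c • G) := by
    ext i j
    by_cases hij : i = j <;> simp [one_apply, hij]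
  rw [hmap, isUnit_iff_isUnit_det, ← RingHom.map_det, isUnit_map_iff] at hC
  exact (isUnit_iff_isUnit_det _).mpr hC

theorem isUnit_one_sub_smul_transpose_of_specRad_lt {c r : ℝ} (hc : |c| ≤ r)
    (h : specRad G < ENNReal.ofReal (1 / r)) : IsUnit (1 - c • Gᵀ) := by
  have hinv : (‖c‖₊ : ENNReal) < (specRad G)⁻¹ := by
    rw [ENNReal.lt_inv_iff_lt_inv, ← enorm_eq_nnnorm, Real.enorm_eq_ofReal_abs]
    refine h.trans_le ?_
    rcases (abs_nonneg c).eq_or_lt with hzero | hpos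
    · simp [← hzero]
    · rw [← ENNReal.ofReal_inv_of_pos hpos, one_div]
      exact ENNReal.ofReal_le_ofReal (inv_anti₀ hpos hc)
  have htranspose : (1 - c • G)ᵀ = 1 - c • Gᵀ := by
    rw [transpose_sub, transpose_smul, transpose_one]
  rw [← htranspose, isUnit_transpose]
  exact isUnit_one_sub_smul_of_lt_inv_specRad G hinv

end SpectralRadius

theorem stmt_6_general {n : ℕ} (G : Matrix (Fin n) (Fin n) ℝ) (β δ : ℝ)
    (hβ0 : 0 ≤ β)
    (hδ0 : 0 < δ)
    (hspec : specRad G < ENNReal.ofReal (1 / (δ * (1 + β)))) :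
    IsUnit (1 - δ • Matrix.fromBlocks Gᵀ (β • Gᵀ) (β • Gᵀ) Gᵀ) ∧
    (fun i : Fin n =>
        ((1 - δ • Matrix.fromBlocks Gᵀ (β • Gᵀ) (β • Gᵀ) Gᵀ)⁻¹ *ᵥ
          Sum.elim (1 : Fin n → ℝ) (1 : Fin n → ℝ)) (Sum.inl i)) =
      (1 - (δ * (1 + β)) • Gᵀ)⁻¹ *ᵥ (1 : Fin n → ℝ) := by
  set S : Matrix (Fin n) (Fin n) ℝ := 1 - δ • Gᵀ
  set T : Matrix (Fin n) (Fin n) ℝ := -(δ * β) • Gᵀ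
  have hblocks : 1 - δ • fromBlocks Gᵀ (β • Gᵀ) (β • Gᵀ) Gᵀ = fromBlocks S T T S := by
    rw [← fromBlocks_one, fromBlocks_smul, sub_eq_add_neg, fromBlocks_neg, fromBlocks_add]
    congr 1 <;> module
  have hsum : S + T = 1 - (δ * (1 + β)) • Gᵀ := by module
  have hdiff : S - T = 1 - (δ * (1 - β)) • Gᵀ := by module
  have hsum_det := isUnit_one_sub_smul_transpose_of_specRad_lt G
    (abs_of_pos (by positivity : 0 < δ * (1 + β))).le hspec
  have hdiff_det := isUnit_one_sub_smul_transpose_of_specRad_lt G (c := δ * (1 - β)) (by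
    rw [abs_mul, abs_of_pos hδ0]
    exact mul_le_mul_of_nonneg_left (abs_le.mpr ⟨by linarith, by linarith⟩) hδ0.le) hspec
  rw [isUnit_iff_isUnit_det] at hsum_det hdiff_det
  have hunit : IsUnit (1 - δ • fromBlocks Gᵀ (β • Gᵀ) (β • Gᵀ) Gᵀ) := by
    rw [hblocks, isUnit_iff_isUnit_det, det_fromBlocks_self_swap, hsum, hdiff]
    exact hsum_det.mul hdiff_det
  refine ⟨hunit, funext fun i => ?_⟩
  have := hunit.invertible
  have hpreimage : Sum.elim (1 : Fin n → ℝ) 1 = (1 - δ • fromBlocks Gᵀ (β • Gᵀ) (β • Gᵀ) Gᵀ) *ᵥ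
      Sum.elim ((S + T)⁻¹ *ᵥ 1) ((S + T)⁻¹ *ᵥ 1) := by
    rw [hblocks, fromBlocks_self_swap_mulVec_sum_elim_self, mulVec_mulVec, hsum,
      mul_nonsing_inv _ hsum_det, one_mulVec]
  rw [inv_mulVec_eq_vec hpreimage, Sum.elim_inl, hsum]

/-- the first `n` entries of `(I − δA)⁻¹ (1ₙ, 1ₙ)` for the block
matrix `A = [[Gᵀ, βGᵀ], [βGᵀ, Gᵀ]]` give the Katz–Bonacich centrality
`κ(G, δ(1+β))`. -/
theorem stmt_6 {n : ℕ} (G : Matrix (Fin n) (Fin n) ℝ) (β δ : ℝ)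
    (hG : ∀ i j, 0 ≤ G i j) (hβ0 : 0 ≤ β) (hβ1 : β < 1)
    (hδ0 : 0 < δ) (hδ1 : δ < 1)
    (hspec : specRad G < ENNReal.ofReal (1 / (δ * (1 + β)))) :
    IsUnit (1 - δ • Matrix.fromBlocks Gᵀ (β • Gᵀ) (β • Gᵀ) Gᵀ) ∧
    (fun i : Fin n =>
        ((1 - δ • Matrix.fromBlocks Gᵀ (β • Gᵀ) (β • Gᵀ) Gᵀ)⁻¹ *ᵥ
          Sum.elim (1 : Fin n → ℝ) (1 : Fin n → ℝ)) (Sum.inl i)) =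
      (1 - (δ * (1 + β)) • Gᵀ)⁻¹ *ᵥ (1 : Fin n → ℝ) :=
  stmt_6_general G β δ hβ0 hδ0 hspec
end

section
/- (Proposition 1, quantitative form) Let G ∈ ℝ₊^{n×n} with out-degrees d_i^out = Σ_j g_{ji}, let d_max^out = max_i d_i^out, let 0 ≤ β < 1 and 0 < δ < 1, and suppose δ(1+β)·d_max^out < 1. Then every entry c_i of the bi-product centrality c = (1/2)·κ(G, δ(1−β)) + (1/2)·κ(G, δ(1+β)) satisfies 1 + δβ·d_i^out ≤ c_i ≤ (1 − δβ·d_max^out) / ((1 − δ(1+β)·d_max^out)·(1 − δ(1−β)·d_max^out)). -/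
/-!
`κ(G, a)` is the fixed point `v = 1 + A v` of `A = a Gᵀ`, a nonnegative matrix whose row sums
`a dᵢ^out` are at most `a d_max^out < 1`. A maximum principle for such fixed points (at a
maximising index `v_k ≤ 1 + a d_max^out v_k`) bounds `v` above by `1 / (1 - a d_max^out)`;
applied to `-v` it gives `v ≥ 0`, hence `v ≥ 1` and `vᵢ ≥ 1 + a dᵢ^out`, and applied to kernel
vectors it makes `1 - A` invertible. Averaging the bounds for `a = δ(1 ∓ β)` gives the claim, as
`½ (1/(1-x) + 1/(1-y)) = (1 - δ d_max^out)/((1-x)(1-y))` for `x, y = δ(1 ∓ β) d_max^out`.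
-/

open Matrix

/-- Katz–Bonacich centrality `κ(G, a) = (I − a Gᵀ)⁻¹ 1`. -/
noncomputable def katz {n : ℕ} (G : Matrix (Fin n) (Fin n) ℝ) (a : ℝ) : Fin n → ℝ :=
  (1 - a • Gᵀ)⁻¹ *ᵥ (1 : Fin n → ℝ)

section MaximumPrinciple

variable {ι : Type*} [Fintype ι] {A : Matrix ι ι ℝ} {r : ℝ}

theorem le_div_one_sub_of_eq_add_mulVec (hA : ∀ i j, 0 ≤ A i j) (hrow : ∀ i, ∑ j, A i j ≤ r)
    (hr : r < 1) {b w : ι → ℝ} {c : ℝ} (hc : 0 ≤ c) (hb : ∀ i, b i ≤ c)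
    (hw : w = b + A *ᵥ w) (i : ι) : w i ≤ c / (1 - r) := by
  have : Nonempty ι := ⟨i⟩
  obtain ⟨k, hk⟩ := Finite.exists_max w
  have hr' : 0 < 1 - r := by linarith
  refine (hk i).trans ?_
  rcases le_or_gt (w k) 0 with hneg | hpos
  · exact hneg.trans (div_nonneg hc hr'.le)
  have hAw : (A *ᵥ w) k ≤ r * w k :=
    calc (A *ᵥ w) k = ∑ j, A k j * w j := rfl
      _ ≤ ∑ j, A k j * w k := by gcongr with j; exacts [hA k j, hk j]
      _ = (∑ j, A k j) * w k := (Finset.sum_mul ..).symm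
      _ ≤ r * w k := by gcongr; exact hrow k
  have hwk : w k = b k + (A *ᵥ w) k := congrFun hw k
  rw [le_div_iff₀ hr']
  linarith [hb k]

theorem nonneg_of_eq_add_mulVec (hA : ∀ i j, 0 ≤ A i j) (hrow : ∀ i, ∑ j, A i j ≤ r)
    (hr : r < 1) {b w : ι → ℝ} (hb : 0 ≤ b) (hw : w = b + A *ᵥ w) : 0 ≤ w := by
  intro i
  have hneg : -w = -b + A *ᵥ (-w) := by rw [mulVec_neg, ← neg_add, ← hw]
  simpa using
    le_div_one_sub_of_eq_add_mulVec hA hrow hr le_rfl (fun i => neg_nonpos.2 (hb i)) hneg i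

variable [DecidableEq ι]

theorem isUnit_one_sub_of_rowSum_lt_one (hA : ∀ i j, 0 ≤ A i j)
    (hrow : ∀ i, ∑ j, A i j ≤ r) (hr : r < 1) : IsUnit (1 - A) := by
  refine mulVec_injective_iff_isUnit.mp fun x y hxy => ?_
  have hfix : ∀ w : ι → ℝ, (1 - A) *ᵥ w = 0 → w = 0 + A *ᵥ w := fun w hw => by
    rw [sub_mulVec, one_mulVec, sub_eq_zero] at hw
    rw [zero_add, ← hw]
  have hxy' : (1 - A) *ᵥ (x - y) = 0 := by rw [mulVec_sub, hxy, sub_self]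
  have hyx : (1 - A) *ᵥ (y - x) = 0 := by rw [mulVec_sub, hxy, sub_self]
  have h₁ := nonneg_of_eq_add_mulVec hA hrow hr le_rfl (hfix _ hxy')
  have h₂ := nonneg_of_eq_add_mulVec hA hrow hr le_rfl (hfix _ hyx)
  exact le_antisymm (sub_nonneg.1 h₂) (sub_nonneg.1 h₁)

theorem resolvent_eq_one_add_mulVec (hunit : IsUnit (1 - A)) :
    (1 - A)⁻¹ *ᵥ 1 = 1 + A *ᵥ ((1 - A)⁻¹ *ᵥ 1) := by
  have hinv : (1 - A) * (1 - A)⁻¹ = 1 := mul_nonsing_inv _ ((isUnit_iff_isUnit_det _).mp hunit)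
  have := congrArg (· *ᵥ (1 : ι → ℝ)) hinv
  simp only [← mulVec_mulVec, one_mulVec, sub_mulVec] at this
  exact sub_eq_iff_eq_add.mp this

theorem one_add_rowSum_le_resolvent (hA : ∀ i j, 0 ≤ A i j) (hrow : ∀ i, ∑ j, A i j ≤ r)
    (hr : r < 1) (i : ι) : 1 + ∑ j, A i j ≤ ((1 - A)⁻¹ *ᵥ 1) i := by
  set v := (1 - A)⁻¹ *ᵥ (1 : ι → ℝ)
  have hv : v = 1 + A *ᵥ v :=
    resolvent_eq_one_add_mulVec (isUnit_one_sub_of_rowSum_lt_one hA hrow hr)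
  have hv0 : 0 ≤ v := nonneg_of_eq_add_mulVec hA hrow hr zero_le_one hv
  have hv1 : ∀ j, 1 ≤ v j := fun j => by
    have hAv : 0 ≤ (A *ᵥ v) j := Finset.sum_nonneg fun k _ => mul_nonneg (hA j k) (hv0 k)
    rw [hv]
    simpa using hAv
  calc 1 + ∑ j, A i j ≤ 1 + ∑ j, A i j * v j := by
        gcongr with j; exact le_mul_of_one_le_right (hA i j) (hv1 j)
    _ = v i := (congrFun hv i).symm

theorem resolvent_le_one_div_one_sub (hA : ∀ i j, 0 ≤ A i j) (hrow : ∀ i, ∑ j, A i j ≤ r)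
    (hr : r < 1) (i : ι) : ((1 - A)⁻¹ *ᵥ 1) i ≤ 1 / (1 - r) :=
  le_div_one_sub_of_eq_add_mulVec hA hrow hr zero_le_one (fun _ => le_rfl)
    (resolvent_eq_one_add_mulVec (isUnit_one_sub_of_rowSum_lt_one hA hrow hr)) i

end MaximumPrinciple

theorem katz_bounds {n : ℕ} {G : Matrix (Fin n) (Fin n) ℝ} {a d : ℝ} (hG : ∀ i j, 0 ≤ G i j)
    (ha : 0 ≤ a) (hdeg : ∀ i, ∑ j, G j i ≤ d) (had : a * d < 1) (i : Fin n) :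
    1 + a * ∑ j, G j i ≤ katz G a i ∧ katz G a i ≤ 1 / (1 - a * d) := by
  have hA : ∀ i j, 0 ≤ (a • Gᵀ) i j := fun i j => mul_nonneg ha (hG j i)
  have hrowSum : ∀ i, ∑ j, (a • Gᵀ) i j = a * ∑ j, G j i := fun i => by
    simp only [Matrix.smul_apply, transpose_apply, smul_eq_mul, Finset.mul_sum]
  have hrow : ∀ i, ∑ j, (a • Gᵀ) i j ≤ a * d := fun i =>
    (hrowSum i).trans_le (mul_le_mul_of_nonneg_left (hdeg i) ha)
  exact ⟨hrowSum i ▸ one_add_rowSum_le_resolvent hA hrow had i,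
    resolvent_le_one_div_one_sub hA hrow had i⟩

theorem stmt_16_general {n : ℕ} (G : Matrix (Fin n) (Fin n) ℝ) (β δ dmax : ℝ)
    (hG : ∀ i j, 0 ≤ G i j) (hβ0 : 0 ≤ β) (hβ1 : β < 1)
    (hδ0 : 0 < δ)
    (hdmax : IsGreatest (Set.range fun i : Fin n => ∑ j, G j i) dmax)
    (hsmall : δ * (1 + β) * dmax < 1) :
    ∀ i : Fin n,
      1 + δ * β * (∑ j, G j i) ≤
        ((1 / 2 : ℝ) • katz G (δ * (1 - β)) + (1 / 2 : ℝ) • katz G (δ * (1 + β))) i ∧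
      ((1 / 2 : ℝ) • katz G (δ * (1 - β)) + (1 / 2 : ℝ) • katz G (δ * (1 + β))) i ≤
        (1 - δ * β * dmax) / ((1 - δ * (1 + β) * dmax) * (1 - δ * (1 - β) * dmax)) := by
  intro i
  have hdeg : ∀ i, ∑ j, G j i ≤ dmax := fun i => hdmax.2 ⟨i, rfl⟩
  have hd0 : 0 ≤ dmax := by
    obtain ⟨k, hk⟩ := hdmax.1
    exact hk ▸ Finset.sum_nonneg fun j _ => hG j k
  have hdi : 0 ≤ ∑ j, G j i := Finset.sum_nonneg fun j _ => hG j i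
  have hlow : 0 ≤ δ * (1 - β) := mul_nonneg hδ0.le (by linarith)
  have hsmall' : δ * (1 - β) * dmax < 1 := by nlinarith [mul_nonneg (mul_nonneg hδ0.le hβ0) hd0]
  obtain ⟨hl₁, hu₁⟩ := katz_bounds hG hlow hdeg hsmall' i
  obtain ⟨hl₂, hu₂⟩ := katz_bounds hG (by positivity) hdeg hsmall i
  simp only [Pi.add_apply, Pi.smul_apply, smul_eq_mul]
  constructor
  · nlinarith [mul_nonneg hlow hdi]
  · have hq : 0 < 1 - δ * (1 + β) * dmax := by linarith
    have hp : 0 < 1 - δ * (1 - β) * dmax := by linarith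
    calc 1 / 2 * katz G (δ * (1 - β)) i + 1 / 2 * katz G (δ * (1 + β)) i
        ≤ 1 / 2 * (1 / (1 - δ * (1 - β) * dmax)) + 1 / 2 * (1 / (1 - δ * (1 + β) * dmax)) := by
          gcongr
      _ = (1 - δ * dmax) / ((1 - δ * (1 + β) * dmax) * (1 - δ * (1 - β) * dmax)) := by
          rw [mul_one_div, mul_one_div, div_add_div _ _ (by positivity) (by positivity),
            div_eq_div_iff (by positivity) (by positivity)]
          ring
      _ ≤ (1 - δ * β * dmax) / ((1 - δ * (1 + β) * dmax) * (1 - δ * (1 - β) * dmax)) := by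
          gcongr
          nlinarith [mul_nonneg hδ0.le hd0]

/-- Proposition 1, quantitative form: if
`δ(1+β) d_max^out < 1`, where `d_max^out = maxᵢ Σⱼ gⱼᵢ`, then every entry of the
bi-product centrality satisfies
`1 + δβ dᵢ^out ≤ cᵢ ≤ (1 − δβ d_max^out)/((1 − δ(1+β)d_max^out)(1 − δ(1−β)d_max^out))`. -/
theorem stmt_16 {n : ℕ} (G : Matrix (Fin n) (Fin n) ℝ) (β δ dmax : ℝ)
    (hG : ∀ i j, 0 ≤ G i j) (hβ0 : 0 ≤ β) (hβ1 : β < 1)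
    (hδ0 : 0 < δ) (hδ1 : δ < 1)
    (hdmax : IsGreatest (Set.range fun i : Fin n => ∑ j, G j i) dmax)
    (hsmall : δ * (1 + β) * dmax < 1) :
    ∀ i : Fin n,
      1 + δ * β * (∑ j, G j i) ≤
        ((1 / 2 : ℝ) • katz G (δ * (1 - β)) + (1 / 2 : ℝ) • katz G (δ * (1 + β))) i ∧
      ((1 / 2 : ℝ) • katz G (δ * (1 - β)) + (1 / 2 : ℝ) • katz G (δ * (1 + β))) i ≤
        (1 - δ * β * dmax) / ((1 - δ * (1 + β) * dmax) * (1 - δ * (1 - β) * dmax)) :=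
  stmt_16_general G β δ dmax hG hβ0 hβ1 hδ0 hdmax hsmall
end
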